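/- Let n ≥ 1 and k ≥ 0 be integers and set N := n + k. Let U be an open subset of (0,∞) × ℝ^{n−1} and let u : U → ℝ be twice continuously differentiable. Define Ω := {(y,z) ∈ ℝ^{k+1} × ℝ^{n−1} : (|y|, z) ∈ U} and v(y,z) := u(|y|, z) for (y,z) ∈ Ω. Then v is twice continuously differentiable on Ω and for every (y,z) ∈ Ω (note y ≠ 0) one has Δv(y,z) = Δu(|y|,z) + (k/|y|)·∂₁u(|y|,z); equivalently, Δv(y,z) = |y|^{−k}·div(x₁^k ∇u)(|y|,z), where div(x₁^k ∇u)(x) = Σ_{i=1}^{n} ∂/∂x_i ( x₁^k ∂u/∂x_i )(x). -/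

import Mathlib

/-! Write `r = ‖y‖`. By the chain rule, `∂_(e,0) v = (⟪y, e⟫ / r) ∂₁u` and `∂_(0,f) v = ∂_f u`
at `(y, z)`. Differentiating once more, a direction `(e, 0)` contributes
`(⟪y, e⟫ / r)² ∂₁₁u + (‖e‖² - (⟪y, e⟫ / r)²) / r · ∂₁u`; summed over an orthonormal basis of
`ℝ^{k+1}` this is `∂₁₁u + (k / r) ∂₁u` by Parseval, `∑ ⟪y, eᵢ⟫² = r²`. The directions `(0, f)`
just reproduce `∂_f ∂_f u`. The divergence form is the product rule
`∂₁(x₁^k ∂₁u) = x₁^k ∂₁₁u + k x₁^(k-1) ∂₁u`. -/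

noncomputable section

/-- The Laplacian (sum of second partial derivatives with respect to the standard
coordinates) of a function on `ℝ × ℝ^{n−1}`. -/
def lapU (n : ℕ) (u : ℝ × EuclideanSpace ℝ (Fin (n - 1)) → ℝ)
    (x : ℝ × EuclideanSpace ℝ (Fin (n - 1))) : ℝ :=
  fderiv ℝ (fun x' => fderiv ℝ u x' (1, 0)) x (1, 0) +
    ∑ j : Fin (n - 1),
      fderiv ℝ (fun x' => fderiv ℝ u x' (0, EuclideanSpace.single j 1)) x
        (0, EuclideanSpace.single j 1)

/-- The Laplacian (sum of second partial derivatives with respect to the standard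
coordinates) of a function on `ℝ^{k+1} × ℝ^{n−1}`. -/
def lapV (n k : ℕ) (v : EuclideanSpace ℝ (Fin (k + 1)) × EuclideanSpace ℝ (Fin (n - 1)) → ℝ)
    (q : EuclideanSpace ℝ (Fin (k + 1)) × EuclideanSpace ℝ (Fin (n - 1))) : ℝ :=
  (∑ i : Fin (k + 1),
      fderiv ℝ (fun q' => fderiv ℝ v q' (EuclideanSpace.single i 1, 0)) q
        (EuclideanSpace.single i 1, 0)) +
    ∑ j : Fin (n - 1),
      fderiv ℝ (fun q' => fderiv ℝ v q' (0, EuclideanSpace.single j 1)) q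
        (0, EuclideanSpace.single j 1)

/-- `div(x₁^k ∇u)(x) = Σ_{i=1}^{n} ∂/∂x_i ( x₁^k ∂u/∂x_i )(x)` for a function `u` on
`ℝ × ℝ^{n−1}`. -/
def divW (n k : ℕ) (u : ℝ × EuclideanSpace ℝ (Fin (n - 1)) → ℝ)
    (x : ℝ × EuclideanSpace ℝ (Fin (n - 1))) : ℝ :=
  fderiv ℝ (fun x' => x'.1 ^ k * fderiv ℝ u x' (1, 0)) x (1, 0) +
    ∑ j : Fin (n - 1),
      fderiv ℝ (fun x' => x'.1 ^ k * fderiv ℝ u x' (0, EuclideanSpace.single j 1)) x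
        (0, EuclideanSpace.single j 1)

open scoped RealInnerProductSpace
open ContinuousLinearMap Filter Topology

section

variable {E F : Type*} [NormedAddCommGroup E] [NormedAddCommGroup F] [NormedSpace ℝ F]

theorem ContinuousLinearMap.apply_mk_zero (L : ℝ × F →L[ℝ] ℝ) (t : ℝ) :
    L (t, 0) = t * L (1, 0) := by
  rw [← smul_eq_mul, ← map_smul, Prod.smul_mk, smul_eq_mul, mul_one, smul_zero]

theorem fderiv_fst_pow_mul_apply {h : ℝ × F → ℝ} {x : ℝ × F} (hh : DifferentiableAt ℝ h x)
    (k : ℕ) (d : ℝ × F) :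
    fderiv ℝ (fun x => x.1 ^ k * h x) x d =
      x.1 ^ k * fderiv ℝ h x d + k * x.1 ^ (k - 1) * d.1 * h x := by
  have hpow : HasFDerivAt (fun x : ℝ × F => x.1 ^ k) _ x :=
    (hasDerivAt_pow k x.1).comp_hasFDerivAt x
      (hasFDerivAt_fst : HasFDerivAt Prod.fst (fst ℝ ℝ F) x)
  rw [(hpow.fun_mul hh.hasFDerivAt).fderiv]
  simp only [add_apply, smul_apply, smul_eq_mul, coe_fst']
  ring

theorem eventually_differentiableAt_comp_norm_prod {u : ℝ × F → ℝ} {p : E × F} (hp : p.1 ≠ 0)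
    (hu : ∀ᶠ x in 𝓝 (‖p.1‖, p.2), DifferentiableAt ℝ u x) :
    ∀ᶠ q in 𝓝 p, q.1 ≠ 0 ∧ DifferentiableAt ℝ u (‖q.1‖, q.2) :=
  (continuous_fst.continuousAt.eventually_ne hp).and
    ((continuous_fst.norm.prodMk continuous_snd).continuousAt.eventually hu)

variable [InnerProductSpace ℝ E]

theorem hasFDerivAt_norm_of_ne_zero {y : E} (hy : y ≠ 0) :
    HasFDerivAt (‖·‖) (‖y‖⁻¹ • innerSL ℝ y) y := by
  have h := (hasStrictFDerivAt_norm_sq y).hasFDerivAt.sqrt (by positivity)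
  simp only [Real.sqrt_sq (norm_nonneg _)] at h
  convert h using 1
  ext w
  simp only [smul_apply, coe_innerSL_apply, smul_eq_mul, one_div, mul_inv_rev, nsmul_eq_mul,
    Nat.cast_ofNat]
  field_simp

theorem hasFDerivAt_inv_norm_mul_inner {y : E} (hy : y ≠ 0) (e : E) :
    HasFDerivAt (fun y => ‖y‖⁻¹ * ⟪y, e⟫)
      (‖y‖⁻¹ • innerSL ℝ e - (⟪y, e⟫ / ‖y‖ ^ 3) • innerSL ℝ y) y := by
  have h : HasFDerivAt (fun y => ‖y‖⁻¹ * ⟪y, e⟫) _ y :=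
    ((hasDerivAt_inv (norm_ne_zero_iff.2 hy)).comp_hasFDerivAt y
      (hasFDerivAt_norm_of_ne_zero hy)).mul ((hasFDerivAt_id y).inner ℝ (hasFDerivAt_const e y))
  refine h.congr_fderiv ?_
  ext w
  simp only [Function.comp_apply, id_eq, real_inner_comm e, neg_smul, smul_neg, add_apply,
    smul_apply, comp_apply, ContinuousLinearMap.prod_apply, id_apply, zero_apply,
    fderivInnerCLM_apply, inner_zero_right, zero_add, smul_eq_mul, neg_apply,
    coe_innerSL_apply, sub_apply]
  field_simp
  ring

theorem hasFDerivAt_norm_fst_prod_snd {q : E × F} (hq : q.1 ≠ 0) :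
    HasFDerivAt (fun q : E × F => (‖q.1‖, q.2))
      (((‖q.1‖⁻¹ • innerSL ℝ q.1).comp (fst ℝ E F)).prod (snd ℝ E F)) q :=
  ((hasFDerivAt_norm_of_ne_zero hq).comp q hasFDerivAt_fst).prodMk hasFDerivAt_snd

theorem ContDiffOn.comp_norm_prod {m : WithTop ℕ∞} {G : Type*} [NormedAddCommGroup G]
    [NormedSpace ℝ G] {u : ℝ × F → G} {U : Set (ℝ × F)} (hu : ContDiffOn ℝ m u U)
    (hU : ∀ x ∈ U, 0 < x.1) :
    ContDiffOn ℝ m (fun q : E × F => u (‖q.1‖, q.2)) {q | (‖q.1‖, q.2) ∈ U} := fun q hq =>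
  (hu _ hq).comp q
    (((contDiffAt_norm ℝ (norm_pos_iff.1 (hU _ hq))).comp q contDiffAt_fst).prodMk
      contDiffAt_snd).contDiffWithinAt
    fun _ h => h

theorem fderiv_comp_norm_prod_apply {g : ℝ × F → ℝ} {q : E × F} (hq : q.1 ≠ 0)
    (hg : DifferentiableAt ℝ g (‖q.1‖, q.2)) (w : E × F) :
    fderiv ℝ (fun q : E × F => g (‖q.1‖, q.2)) q w =
      fderiv ℝ g (‖q.1‖, q.2) (‖q.1‖⁻¹ * ⟪q.1, w.1⟫, w.2) := by
  have h : HasFDerivAt (fun q : E × F => g (‖q.1‖, q.2)) _ q :=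
    hg.hasFDerivAt.comp q (hasFDerivAt_norm_fst_prod_snd hq)
  simp [h.fderiv]

theorem fderiv_comp_norm_prod_apply_inl {g : ℝ × F → ℝ} {q : E × F} (hq : q.1 ≠ 0)
    (hg : DifferentiableAt ℝ g (‖q.1‖, q.2)) (e : E) :
    fderiv ℝ (fun q : E × F => g (‖q.1‖, q.2)) q (e, 0) =
      ‖q.1‖⁻¹ * ⟪q.1, e⟫ * fderiv ℝ g (‖q.1‖, q.2) (1, 0) := by
  rw [fderiv_comp_norm_prod_apply hq hg, apply_mk_zero]

theorem fderiv_comp_norm_prod_apply_inr {g : ℝ × F → ℝ} {q : E × F} (hq : q.1 ≠ 0)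
    (hg : DifferentiableAt ℝ g (‖q.1‖, q.2)) (f : F) :
    fderiv ℝ (fun q : E × F => g (‖q.1‖, q.2)) q (0, f) = fderiv ℝ g (‖q.1‖, q.2) (0, f) := by
  simp [fderiv_comp_norm_prod_apply hq hg]

theorem fderiv_fderiv_comp_norm_prod_inl {u : ℝ × F → ℝ} {p : E × F} (hp : p.1 ≠ 0)
    (hu : ∀ᶠ x in 𝓝 (‖p.1‖, p.2), DifferentiableAt ℝ u x)
    (hu₁ : DifferentiableAt ℝ (fun x => fderiv ℝ u x (1, 0)) (‖p.1‖, p.2)) (e : E) :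
    fderiv ℝ (fun q => fderiv ℝ (fun q : E × F => u (‖q.1‖, q.2)) q (e, 0)) p (e, 0) =
      (⟪p.1, e⟫ / ‖p.1‖) ^ 2 * fderiv ℝ (fun x => fderiv ℝ u x (1, 0)) (‖p.1‖, p.2) (1, 0) +
        (‖e‖ ^ 2 - (⟪p.1, e⟫ / ‖p.1‖) ^ 2) / ‖p.1‖ * fderiv ℝ u (‖p.1‖, p.2) (1, 0) := by
  have heq : (fun q => fderiv ℝ (fun q : E × F => u (‖q.1‖, q.2)) q (e, 0)) =ᶠ[𝓝 p]
      fun q => ‖q.1‖⁻¹ * ⟪q.1, e⟫ * fderiv ℝ u (‖q.1‖, q.2) (1, 0) :=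
    (eventually_differentiableAt_comp_norm_prod hp hu).mono fun q hq =>
      fderiv_comp_norm_prod_apply_inl hq.1 hq.2 e
  have ha : HasFDerivAt (fun q : E × F => ‖q.1‖⁻¹ * ⟪q.1, e⟫) _ p :=
    (hasFDerivAt_inv_norm_mul_inner hp e).comp p hasFDerivAt_fst
  have hb : DifferentiableAt ℝ (fun q : E × F => fderiv ℝ u (‖q.1‖, q.2) (1, 0)) p :=
    (hu₁.comp p (hasFDerivAt_norm_fst_prod_snd hp).differentiableAt :)
  rw [heq.fderiv_eq, fderiv_fun_mul ha.differentiableAt hb, add_apply, smul_apply, smul_apply,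
    ha.fderiv, fderiv_comp_norm_prod_apply_inl hp hu₁]
  simp only [smul_eq_mul, sub_comp, smul_comp, sub_apply, smul_apply, comp_apply, coe_fst',
    coe_innerSL_apply, real_inner_self_eq_norm_sq]
  field_simp

theorem fderiv_fderiv_comp_norm_prod_inr {u : ℝ × F → ℝ} {p : E × F} (hp : p.1 ≠ 0)
    (hu : ∀ᶠ x in 𝓝 (‖p.1‖, p.2), DifferentiableAt ℝ u x) (f : F)
    (hu₁ : DifferentiableAt ℝ (fun x => fderiv ℝ u x (0, f)) (‖p.1‖, p.2)) :
    fderiv ℝ (fun q => fderiv ℝ (fun q : E × F => u (‖q.1‖, q.2)) q (0, f)) p (0, f) =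
      fderiv ℝ (fun x => fderiv ℝ u x (0, f)) (‖p.1‖, p.2) (0, f) := by
  have heq : (fun q => fderiv ℝ (fun q : E × F => u (‖q.1‖, q.2)) q (0, f)) =ᶠ[𝓝 p]
      fun q => fderiv ℝ u (‖q.1‖, q.2) (0, f) :=
    (eventually_differentiableAt_comp_norm_prod hp hu).mono fun q hq =>
      fderiv_comp_norm_prod_apply_inr hq.1 hq.2 f
  rw [heq.fderiv_eq, fderiv_comp_norm_prod_apply_inr hp hu₁]

theorem OrthonormalBasis.sum_fderiv_fderiv_comp_norm_prod_inl {ι : Type*} [Fintype ι]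
    (b : OrthonormalBasis ι ℝ E) {u : ℝ × F → ℝ} {p : E × F} (hp : p.1 ≠ 0)
    (hu : ∀ᶠ x in 𝓝 (‖p.1‖, p.2), DifferentiableAt ℝ u x)
    (hu₁ : DifferentiableAt ℝ (fun x => fderiv ℝ u x (1, 0)) (‖p.1‖, p.2)) :
    ∑ i, fderiv ℝ (fun q => fderiv ℝ (fun q : E × F => u (‖q.1‖, q.2)) q (b i, 0)) p (b i, 0) =
      fderiv ℝ (fun x => fderiv ℝ u x (1, 0)) (‖p.1‖, p.2) (1, 0) +
        (Fintype.card ι - 1) / ‖p.1‖ * fderiv ℝ u (‖p.1‖, p.2) (1, 0) := by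
  have hsq : ∑ i, (⟪p.1, b i⟫ / ‖p.1‖) ^ 2 = 1 := by
    simp_rw [div_pow, ← Finset.sum_div, b.sum_sq_inner_left]
    field_simp
  simp_rw [fderiv_fderiv_comp_norm_prod_inl hp hu hu₁, b.orthonormal.1, Finset.sum_add_distrib,
    ← Finset.sum_mul, ← Finset.sum_div, Finset.sum_sub_distrib, hsq]
  simp

end

theorem lapV_comp_norm_prod (n k : ℕ) {u : ℝ × EuclideanSpace ℝ (Fin (n - 1)) → ℝ}
    {p : EuclideanSpace ℝ (Fin (k + 1)) × EuclideanSpace ℝ (Fin (n - 1))} (hp : p.1 ≠ 0)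
    (hu : ∀ᶠ x in 𝓝 (‖p.1‖, p.2), DifferentiableAt ℝ u x)
    (hu₂ : ∀ d, DifferentiableAt ℝ (fun x => fderiv ℝ u x d) (‖p.1‖, p.2)) :
    lapV n k (fun q => u (‖q.1‖, q.2)) p =
      lapU n u (‖p.1‖, p.2) + k / ‖p.1‖ * fderiv ℝ u (‖p.1‖, p.2) (1, 0) := by
  have hrad := (EuclideanSpace.basisFun (Fin (k + 1)) ℝ).sum_fderiv_fderiv_comp_norm_prod_inl
    hp hu (hu₂ _)
  simp only [EuclideanSpace.basisFun_apply, Fintype.card_fin] at hrad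
  simp only [lapV, lapU, hrad, fderiv_fderiv_comp_norm_prod_inr hp hu _ (hu₂ _)]
  push_cast
  ring

theorem divW_eq_pow_mul_lapU_add (n k : ℕ) {u : ℝ × EuclideanSpace ℝ (Fin (n - 1)) → ℝ}
    {x : ℝ × EuclideanSpace ℝ (Fin (n - 1))}
    (hu₂ : ∀ d, DifferentiableAt ℝ (fun x => fderiv ℝ u x d) x) :
    divW n k u x = x.1 ^ k * lapU n u x + k * x.1 ^ (k - 1) * fderiv ℝ u x (1, 0) := by
  simp only [divW, lapU, fderiv_fst_pow_mul_apply (hu₂ _), mul_one, mul_zero, zero_mul,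
    add_zero, mul_add, Finset.mul_sum]
  ring

theorem inv_pow_mul_natCast_mul_pow_sub_one {r : ℝ} (hr : r ≠ 0) (k : ℕ) :
    (r ^ k)⁻¹ * (k * r ^ (k - 1)) = k / r := by
  rcases k with _ | k
  · simp
  · simp only [pow_succ, mul_inv_rev, Nat.cast_add, Nat.cast_one, add_tsub_cancel_right]
    field_simp

theorem stmt_3_general (n k : ℕ)
    (U : Set (ℝ × EuclideanSpace ℝ (Fin (n - 1)))) (hUopen : IsOpen U)
    (hUpos : ∀ x ∈ U, 0 < x.1)
    (u : ℝ × EuclideanSpace ℝ (Fin (n - 1)) → ℝ) (hu : ContDiffOn ℝ 2 u U)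
    (Ω : Set (EuclideanSpace ℝ (Fin (k + 1)) × EuclideanSpace ℝ (Fin (n - 1))))
    (hΩ : Ω = {p | (‖p.1‖, p.2) ∈ U})
    (v : EuclideanSpace ℝ (Fin (k + 1)) × EuclideanSpace ℝ (Fin (n - 1)) → ℝ)
    (hv : ∀ p, v p = u (‖p.1‖, p.2)) :
    ContDiffOn ℝ 2 v Ω ∧
    ∀ p ∈ Ω,
      lapV n k v p =
          lapU n u (‖p.1‖, p.2) + ((k : ℝ) / ‖p.1‖) * fderiv ℝ u (‖p.1‖, p.2) (1, 0) ∧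
      lapV n k v p = (‖p.1‖ ^ k)⁻¹ * divW n k u (‖p.1‖, p.2) := by
  obtain rfl : v = fun p => u (‖p.1‖, p.2) := funext hv
  subst hΩ
  refine ⟨hu.comp_norm_prod hUpos, fun p hp => ?_⟩
  have hp1 : p.1 ≠ 0 := norm_pos_iff.1 (hUpos _ hp)
  have huC : ContDiffAt ℝ 2 u (‖p.1‖, p.2) := hu.contDiffAt (hUopen.mem_nhds hp)
  have hu₁ : ∀ᶠ x in 𝓝 (‖p.1‖, p.2), DifferentiableAt ℝ u x :=
    (huC.eventually (by simp)).mono fun x hx => hx.differentiableAt (by norm_num)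
  have hu₂ : ∀ d, DifferentiableAt ℝ (fun x => fderiv ℝ u x d) (‖p.1‖, p.2) := fun d =>
    ((huC.fderiv_right (m := 1) le_rfl).differentiableAt one_ne_zero).clm_apply
      (differentiableAt_const d)
  have hlap := lapV_comp_norm_prod n k hp1 hu₁ hu₂
  refine ⟨hlap, ?_⟩
  rw [hlap, divW_eq_pow_mul_lapU_add n k hu₂, mul_add, ← mul_assoc,
    inv_mul_cancel₀ (pow_ne_zero _ (norm_ne_zero_iff.2 hp1)), one_mul, ← mul_assoc,
    inv_pow_mul_natCast_mul_pow_sub_one (norm_ne_zero_iff.2 hp1)]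

/-- if `u : U → ℝ` is `C²` on an open `U ⊆ (0,∞) × ℝ^{n−1}`,
`Ω = {(y,z) : (|y|,z) ∈ U}` and `v(y,z) = u(|y|,z)`, then `v` is `C²` on `Ω` and
`Δv(y,z) = Δu(|y|,z) + (k/|y|)·∂₁u(|y|,z) = |y|^{−k}·div(x₁^k ∇u)(|y|,z)` on `Ω`. -/
theorem stmt_3 (n k : ℕ) (hn : 1 ≤ n)
    (U : Set (ℝ × EuclideanSpace ℝ (Fin (n - 1)))) (hUopen : IsOpen U)
    (hUpos : ∀ x ∈ U, 0 < x.1)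
    (u : ℝ × EuclideanSpace ℝ (Fin (n - 1)) → ℝ) (hu : ContDiffOn ℝ 2 u U)
    (Ω : Set (EuclideanSpace ℝ (Fin (k + 1)) × EuclideanSpace ℝ (Fin (n - 1))))
    (hΩ : Ω = {p | (‖p.1‖, p.2) ∈ U})
    (v : EuclideanSpace ℝ (Fin (k + 1)) × EuclideanSpace ℝ (Fin (n - 1)) → ℝ)
    (hv : ∀ p, v p = u (‖p.1‖, p.2)) :
    ContDiffOn ℝ 2 v Ω ∧
    ∀ p ∈ Ω,
      lapV n k v p =
          lapU n u (‖p.1‖, p.2) + ((k : ℝ) / ‖p.1‖) * fderiv ℝ u (‖p.1‖, p.2) (1, 0) ∧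
      lapV n k v p = (‖p.1‖ ^ k)⁻¹ * divW n k u (‖p.1‖, p.2) :=
  stmt_3_general n k U hUopen hUpos u hu Ω hΩ v hv

end
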